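/- arXiv:1009.1611 — 8 statements merged into one kernel-verified Lean document; each statement's English description precedes it below -/
import Mathlib

section
/- Let n ≥ 1 and let F ⊆ ℕⁿ be a nonempty finite set, with Newton polyhedron Γ₊ defined as the convex hull in ℝⁿ of ⋃_{ν∈F} ({ν} + [0,∞)ⁿ). If the point (1,1,…,1) does not belong to Γ₊, then there exists a ∈ ℝⁿ with aᵢ > 0 for every i such that m(a) > s(a), where m(a) = min_{ν∈F} ⟨a,ν⟩ and s(a) = a₁ + ⋯ + aₙ. -/
/-!
The Newton polyhedron is the convex hull of finitely many points plus the closed positive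
orthant, hence a closed convex upper set. A linear functional `y ↦ a ⬝ᵥ y` therefore strictly
separates `(1, …, 1)` from it, and `a ≥ 0` because the functional is bounded below on an upper
set. Raising every coefficient of `a` by a small `ε > 0` makes `a` strictly positive, keeps
`s(a)` below the separating level and does not decrease `⟨a, ν⟩` for `ν ∈ ℕⁿ`.
-/

open scoped Pointwise

lemma nonneg_of_forall_lt_add_mul {b c u : ℝ} (h : ∀ t : ℝ, 0 ≤ t → u < c + t * b) : 0 ≤ b := by
  by_contra! hb
  have hcu : 0 < c - u := by linarith [h 0 le_rfl]
  have := h ((c - u) / -b) (div_nonneg hcu.le (neg_nonneg.2 hb.le))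
  rw [div_mul_eq_mul_div, div_neg, mul_div_cancel_right₀ _ hb.ne] at this
  linarith

section
variable {ι : Type*} [Fintype ι]

lemma StrongDual.apply_eq_dotProduct [DecidableEq ι] (f : StrongDual ℝ (ι → ℝ)) (x : ι → ℝ) :
    f x = (fun i => f (Pi.single i 1)) ⬝ᵥ x := by
  conv_lhs => rw [← Finset.univ_sum_single x]
  refine (map_sum f _ _).trans (Finset.sum_congr rfl fun i _ => ?_)
  have hsingle : Pi.single i (x i) = x i • Pi.single i (1 : ℝ) := by
    rw [← Pi.single_smul', smul_eq_mul, mul_one]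
  rw [hsingle, map_smul, smul_eq_mul, mul_comm]

theorem IsUpperSet.exists_nonneg_separating_dotProduct {K : Set (ι → ℝ)} (hupper : IsUpperSet K)
    (hconv : Convex ℝ K) (hclosed : IsClosed K) {x : ι → ℝ} (hx : x ∉ K) :
    ∃ a : ι → ℝ, 0 ≤ a ∧ ∃ u, a ⬝ᵥ x < u ∧ ∀ y ∈ K, u < a ⬝ᵥ y := by
  classical
  rcases K.eq_empty_or_nonempty with rfl | ⟨y₀, hy₀⟩
  · exact ⟨0, le_rfl, 1, by simp, by simp⟩
  obtain ⟨f, u, hfx, hfK⟩ := geometric_hahn_banach_point_closed hconv hclosed hx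
  obtain ⟨a, hf⟩ : ∃ a : ι → ℝ, ∀ y, f y = a ⬝ᵥ y := ⟨_, f.apply_eq_dotProduct⟩
  simp only [hf] at hfx hfK
  refine ⟨a, fun i => nonneg_of_forall_lt_add_mul (c := a ⬝ᵥ y₀) (u := u) fun t ht => ?_,
    u, hfx, hfK⟩
  have hmem : y₀ + t • Pi.single i 1 ∈ K :=
    hupper (le_add_of_nonneg_right (smul_nonneg ht (Pi.single_nonneg.2 zero_le_one))) hy₀
  simpa [dotProduct_add, dotProduct_smul, dotProduct_single] using hfK _ hmem

theorem exists_pos_ge_sum_lt {a : ι → ℝ} (ha : 0 ≤ a) {u : ℝ} (hu : ∑ i, a i < u) :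
    ∃ b : ι → ℝ, (∀ i, 0 < b i) ∧ a ≤ b ∧ ∑ i, b i < u := by
  set ε := (u - ∑ i, a i) / (Fintype.card ι + 1)
  have hε : 0 < ε := div_pos (by linarith) (by positivity)
  have hcard : (Fintype.card ι + 1) * ε = u - ∑ i, a i := mul_div_cancel₀ _ (by positivity)
  refine ⟨a + fun _ => ε, fun i => add_pos_of_nonneg_of_pos (ha i) hε,
    le_add_of_nonneg_right fun _ => hε.le, ?_⟩
  simp only [Pi.add_apply, Finset.sum_add_distrib, Finset.sum_const, Finset.card_univ,
    nsmul_eq_mul]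
  linarith

end

def newtonPolyhedron {ι : Type*} (F : Finset (ι → ℕ)) : Set (ι → ℝ) :=
  convexHull ℝ (⋃ (ν : ι → ℕ) (_ : ν ∈ F),
    (({fun i => (ν i : ℝ)} : Set (ι → ℝ)) + {x : ι → ℝ | ∀ i, 0 ≤ x i}))

section
variable {ι : Type*} (F : Finset (ι → ℕ))

theorem newtonPolyhedron_eq :
    newtonPolyhedron F = convexHull ℝ ((fun (ν : ι → ℕ) i => (ν i : ℝ)) '' F) + Set.Ici 0 := by
  have hvertices : (⋃ ν ∈ F, ({fun i => (ν i : ℝ)} : Set (ι → ℝ))) =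
      (fun (ν : ι → ℕ) i => (ν i : ℝ)) '' F := by
    ext; simp [eq_comm]
  rw [newtonPolyhedron, ← Set.iUnion₂_add, hvertices, convexHull_add]
  exact congrArg _ (convex_Ici 0).convexHull_eq

theorem convex_newtonPolyhedron : Convex ℝ (newtonPolyhedron F) := convex_convexHull ℝ _

theorem isClosed_newtonPolyhedron : IsClosed (newtonPolyhedron F) := by
  rw [newtonPolyhedron_eq]
  exact isClosed_Ici.add_left_of_isCompact ((F.finite_toSet.image _).isCompact_convexHull ℝ)

theorem isUpperSet_newtonPolyhedron : IsUpperSet (newtonPolyhedron F) := by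
  rw [newtonPolyhedron_eq]
  exact (isUpperSet_Ici 0).add_left

theorem cast_mem_newtonPolyhedron {ν : ι → ℕ} (hν : ν ∈ F) :
    (fun i => (ν i : ℝ)) ∈ newtonPolyhedron F := by
  rw [newtonPolyhedron_eq]
  simpa using Set.add_mem_add (subset_convexHull ℝ _ (Set.mem_image_of_mem _ hν))
    (Set.self_mem_Ici (a := (0 : ι → ℝ)))

end

theorem newton_one_not_mem_exists_pos_general (n : ℕ)
    (F : Finset (Fin n → ℕ)) (hF : F.Nonempty)
    (h1 : (fun _ => (1 : ℝ)) ∉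
      convexHull ℝ (⋃ ν ∈ F,
        (({fun i => (ν i : ℝ)} : Set (Fin n → ℝ)) +
          {x : Fin n → ℝ | ∀ i, 0 ≤ x i}))) :
    ∃ a : Fin n → ℝ, (∀ i, 0 < a i) ∧
      (∑ i, a i) < F.inf' hF fun ν => ∑ i, a i * (ν i : ℝ) := by
  obtain ⟨a, ha, u, hau, hK⟩ :=
    (isUpperSet_newtonPolyhedron F).exists_nonneg_separating_dotProduct
      (convex_newtonPolyhedron F) (isClosed_newtonPolyhedron F) h1
  obtain ⟨b, hb, hab, hbu⟩ := exists_pos_ge_sum_lt ha ((dotProduct_one a).symm.trans_lt hau)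
  refine ⟨b, hb, (Finset.lt_inf'_iff _).2 fun ν hν => ?_⟩
  calc ∑ i, b i < u := hbu
    _ < a ⬝ᵥ fun i => (ν i : ℝ) := hK _ (cast_mem_newtonPolyhedron F hν)
    _ ≤ b ⬝ᵥ fun i => (ν i : ℝ) :=
      dotProduct_le_dotProduct_of_nonneg_right hab fun i => Nat.cast_nonneg _

/-- If `(1,…,1)` is not in the Newton polyhedron `Γ₊` of a nonempty finite
support `F ⊆ ℕⁿ`, then there is a strictly positive direction `a` with
`m(a) > s(a)`. -/
theorem newton_one_not_mem_exists_pos (n : ℕ) (hn : 1 ≤ n)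
    (F : Finset (Fin n → ℕ)) (hF : F.Nonempty)
    (h1 : (fun _ => (1 : ℝ)) ∉
      convexHull ℝ (⋃ ν ∈ F,
        (({fun i => (ν i : ℝ)} : Set (Fin n → ℝ)) +
          {x : Fin n → ℝ | ∀ i, 0 ≤ x i}))) :
    ∃ a : Fin n → ℝ, (∀ i, 0 < a i) ∧
      (∑ i, a i) < F.inf' hF fun ν => ∑ i, a i * (ν i : ℝ) :=
  newton_one_not_mem_exists_pos_general n F hF h1
end

section
/- Let n ≥ 1 and let F ⊆ ℕⁿ be a nonempty finite set, with Newton polyhedron Γ₊ the convex hull in ℝⁿ of ⋃_{ν∈F} ({ν} + [0,∞)ⁿ). If (1,1,…,1) ∈ Γ₊, then m(a) ≤ s(a) for every a ∈ [0,∞)ⁿ; if moreover (1,1,…,1) is not in the interior of Γ₊, then there exists a nonzero a ∈ [0,∞)ⁿ with m(a) = s(a). -/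
open scoped Pointwise

/-- If `(1,…,1)` lies in the Newton polyhedron `Γ₊` of a nonempty finite support
`F ⊆ ℕⁿ`, then `m(a) ≤ s(a)` for all `a ≥ 0`; if moreover `(1,…,1)` is not in
the interior of `Γ₊` then `m(a) = s(a)` for some nonzero `a ≥ 0`. -/
theorem newton_one_mem_m_le_s (n : ℕ) (hn : 1 ≤ n)
    (F : Finset (Fin n → ℕ)) (hF : F.Nonempty)
    (Γ : Set (Fin n → ℝ))
    (hΓ : Γ = convexHull ℝ (⋃ ν ∈ F,
      (({fun i => (ν i : ℝ)} : Set (Fin n → ℝ)) +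
        {x : Fin n → ℝ | ∀ i, 0 ≤ x i})))
    (h1 : (fun _ => (1 : ℝ)) ∈ Γ) :
    (∀ a : Fin n → ℝ, (∀ i, 0 ≤ a i) →
      (F.inf' hF fun ν => ∑ i, a i * (ν i : ℝ)) ≤ ∑ i, a i) ∧
    ((fun _ => (1 : ℝ)) ∉ interior Γ →
      ∃ a : Fin n → ℝ, a ≠ 0 ∧ (∀ i, 0 ≤ a i) ∧
        (F.inf' hF fun ν => ∑ i, a i * (ν i : ℝ)) = ∑ i, a i) := by
  -- membership lemma
  have hmemΓ : ∀ ν ∈ F, ∀ t : Fin n → ℝ, (∀ i, 0 ≤ t i) →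
      ((fun i => (ν i : ℝ)) + t) ∈ Γ := by
    intro ν hν t ht
    rw [hΓ]
    apply subset_convexHull
    simp only [Set.mem_iUnion]
    exact ⟨ν, hν, Set.add_mem_add rfl ht⟩
  -- Part 1
  have part1 : ∀ a : Fin n → ℝ, (∀ i, 0 ≤ a i) →
      (F.inf' hF fun ν => ∑ i, a i * (ν i : ℝ)) ≤ ∑ i, a i := by
    intro a ha
    set c := F.inf' hF fun ν => ∑ i, a i * (ν i : ℝ) with hc
    have hlin : IsLinearMap ℝ (fun x : Fin n → ℝ => ∑ i, a i * x i) := by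
      constructor
      · intro x y; simp [Pi.add_apply, mul_add, Finset.sum_add_distrib]
      · intro r x; simp [Pi.smul_apply, smul_eq_mul, Finset.mul_sum, mul_left_comm]
    have hsub : Γ ⊆ {x : Fin n → ℝ | c ≤ ∑ i, a i * x i} := by
      rw [hΓ]
      apply convexHull_min _ (convex_halfSpace_ge hlin c)
      rintro x hx
      simp only [Set.mem_iUnion] at hx
      obtain ⟨ν, hν, hx⟩ := hx
      rw [Set.mem_add] at hx
      obtain ⟨u, hu, t, ht, rfl⟩ := hx
      rw [Set.mem_singleton_iff] at hu
      subst hu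
      have h1' : c ≤ ∑ i, a i * (ν i : ℝ) := Finset.inf'_le _ hν
      have h2' : 0 ≤ ∑ i, a i * t i :=
        Finset.sum_nonneg fun i _ => mul_nonneg (ha i) (ht i)
      have : ∑ i, a i * ((fun i => (ν i : ℝ)) + t) i
          = (∑ i, a i * (ν i : ℝ)) + ∑ i, a i * t i := by
        simp [mul_add, Finset.sum_add_distrib]
      simp only [Set.mem_setOf_eq, this]
      linarith
    have := hsub h1
    simpa using this
  refine ⟨part1, ?_⟩
  intro hnotint
  obtain ⟨ν₀, hν₀⟩ := hF
  -- interior of Γ is nonempty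
  set y : Fin n → ℝ := fun i => (ν₀ i : ℝ) + 1 with hy_def
  have hconv : Convex ℝ Γ := hΓ ▸ convex_convexHull ℝ _
  have hopen : IsOpen {x : Fin n → ℝ | ∀ i, (ν₀ i : ℝ) < x i} := by
    have heq : {x : Fin n → ℝ | ∀ i, (ν₀ i : ℝ) < x i}
        = ⋂ i, {x : Fin n → ℝ | (ν₀ i : ℝ) < x i} := by
      ext x; simp
    rw [heq]
    exact isOpen_iInter_of_finite fun i =>
      isOpen_lt continuous_const (continuous_apply i)
  have hsubΓ : {x : Fin n → ℝ | ∀ i, (ν₀ i : ℝ) < x i} ⊆ Γ := by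
    intro x hx
    have := hmemΓ ν₀ hν₀ (x - fun i => (ν₀ i : ℝ)) (fun i => by
      have := hx i; simp only [Pi.sub_apply]; linarith)
    simpa using this
  have hy : y ∈ interior Γ := by
    apply mem_interior.2 ⟨_, hsubΓ, hopen, ?_⟩
    intro i; simp [hy_def]
  -- separating functional
  obtain ⟨f, hf⟩ := geometric_hahn_banach_open_point hconv.interior isOpen_interior hnotint
  -- extend the inequality from the interior to Γ
  have key : ∀ x ∈ Γ, f x ≤ f (fun _ => (1 : ℝ)) := by
    intro x hx
    have hseg : ∀ t : ℝ, 0 < t → t ≤ 1 → (1 - t) • x + t • y ∈ interior Γ := fun t ht ht1 =>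
      hconv.combo_self_interior_mem_interior hx hy (by linarith) ht (by ring)
    have hev : ∀ᶠ t in nhdsWithin (0:ℝ) (Set.Ioi 0),
        f ((1 - t) • x + t • y) < f (fun _ => (1 : ℝ)) := by
      filter_upwards [Ioo_mem_nhdsGT_of_mem
        (by norm_num : (0:ℝ) ∈ Set.Ico (0:ℝ) 1)] with t ht
      exact hf _ (hseg t ht.1 ht.2.le)
    have hten : Filter.Tendsto (fun t : ℝ => f ((1 - t) • x + t • y))
        (nhdsWithin (0:ℝ) (Set.Ioi 0)) (nhds (f x)) := by
      have hcont : Continuous (fun t : ℝ => f ((1 - t) • x + t • y)) := by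
        apply f.continuous.comp
        fun_prop
      have h0 : Filter.Tendsto (fun t : ℝ => f ((1 - t) • x + t • y))
          (nhds 0) (nhds (f x)) := by
        have := hcont.tendsto 0
        simpa using this
      exact h0.mono_left nhdsWithin_le_nhds
    exact le_of_tendsto hten (hev.mono fun t h => h.le)
  set a : Fin n → ℝ := fun i => -(f (Pi.single i 1)) with ha_def
  -- relate a and f
  have hfa : ∀ x : Fin n → ℝ, ∑ i, a i * x i = -(f x) := by
    intro x
    have hx : f x = ∑ i, x i * f (Pi.single i 1) := by
      conv_lhs => rw [pi_eq_sum_univ x]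
      rw [map_sum]
      refine Finset.sum_congr rfl fun i _ => ?_
      rw [f.map_smul, smul_eq_mul]
      congr 1
      congr 1
      funext j
      simp [Pi.single_apply, eq_comm]
    rw [hx, ← Finset.sum_neg_distrib]
    refine Finset.sum_congr rfl fun i _ => ?_
    simp [ha_def]; ring
  have hf1 : f (fun _ => (1:ℝ)) = -(∑ i, a i) := by
    have := hfa (fun _ => (1:ℝ))
    simp only [mul_one] at this
    linarith
  -- a is nonnegative
  have hν₀Γ : (fun i => (ν₀ i : ℝ)) ∈ Γ := by
    have := hmemΓ ν₀ hν₀ 0 (fun i => le_refl 0)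
    simpa using this
  have ha0 : ∀ i, 0 ≤ a i := by
    intro i
    by_contra h
    push_neg at h
    have hfν₀ : f (fun i => (ν₀ i : ℝ)) ≤ f (fun _ => (1:ℝ)) := key _ hν₀Γ
    set T : ℝ := (f (fun _ => (1:ℝ)) - f (fun i => (ν₀ i : ℝ)) + 1) / (-(a i)) with hT
    have hT0 : 0 ≤ T := div_nonneg (by linarith) (by linarith)
    have hmem : ((fun j => (ν₀ j : ℝ)) + T • (Pi.single i (1:ℝ) : Fin n → ℝ)) ∈ Γ := by
      apply hmemΓ ν₀ hν₀
      intro j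
      simp only [Pi.smul_apply, smul_eq_mul]
      rcases eq_or_ne j i with rfl | hne
      · simp; positivity
      · simp [Pi.single_apply, hne]
    have hkey := key _ hmem
    rw [map_add, f.map_smul, smul_eq_mul] at hkey
    have hfs : f (Pi.single i 1) = -(a i) := by simp [ha_def]
    rw [hfs] at hkey
    have hTmul : T * (-(a i)) = f (fun _ => (1:ℝ)) - f (fun i => (ν₀ i : ℝ)) + 1 := by
      rw [hT, div_mul_cancel₀ _ (by linarith : -a i ≠ 0)]
    rw [hTmul] at hkey
    linarith
  -- a is nonzero
  have hane : a ≠ 0 := by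
    intro h
    have hfy : f y < f (fun _ => (1:ℝ)) := hf _ hy
    have h1' : f y = 0 := by have := hfa y; rw [h] at this; simp at this; linarith
    have h2' : f (fun _ => (1:ℝ)) = 0 := by
      have := hfa (fun _ => (1:ℝ)); rw [h] at this; simp at this; linarith
    rw [h1', h2'] at hfy
    exact lt_irrefl _ hfy
  refine ⟨a, hane, ha0, ?_⟩
  refine le_antisymm (part1 a ha0) ?_
  apply Finset.le_inf'
  intro ν hν
  have hνΓ : (fun i => (ν i : ℝ)) ∈ Γ := by
    have := hmemΓ ν hν 0 (fun i => le_refl 0)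
    simpa using this
  have := key _ hνΓ
  have h2' := hfa (fun i => (ν i : ℝ))
  rw [hf1] at this
  linarith
end

section
/- Let n ≥ 1 and let F ⊆ ℕⁿ be a nonempty finite set. For a ∈ [0,∞)ⁿ set m(a) = min_{ν∈F} ⟨a,ν⟩ and s(a) = a₁ + ⋯ + aₙ. Then for every real k > 0, sup { m(a) − s(a) : a ∈ [0,∞)ⁿ, m(a) ≤ k } = k · Le, where Le = max(0, sup { 1 − s(a)/m(a) : a ∈ [0,∞)ⁿ, m(a) > 0 }) (the inner supremum over the empty set being taken as 0). -/
/-!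
Only the positive homogeneity and nonnegativity of `m` and `s` on the cone `a ≥ 0` matter.
Writing `m - s = m · (1 - s / m)` where `m > 0` (and `m - s = -s ≤ 0` where `m = 0`) bounds the
left-hand side by `k · Le`. Conversely, rescaling `a` with `m(a) > 0` so that `m(a) = k` turns
`k · (1 - s(a)/m(a))` into the value of `m - s` at the rescaled point, and `a = 0` gives `0`.
-/

def PosHomogeneousOn {E : Type*} [SMul ℝ E] (f : E → ℝ) (K : Set E) : Prop :=
  ∀ a ∈ K, ∀ t : ℝ, 0 < t → f (t • a) = t * f a

section PointedCone

variable {E : Type*} [AddCommGroup E] [Module ℝ E] {K : PointedCone ℝ E} {m s : E → ℝ}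

lemma PosHomogeneousOn.map_zero (hf : PosHomogeneousOn m K) : m 0 = 0 := by
  have h := hf 0 K.zero_mem 2 two_pos
  rw [smul_zero] at h
  linarith

lemma bddAbove_one_sub_div (hs : ∀ a ∈ K, 0 ≤ s a) :
    BddAbove {x | ∃ a ∈ K, 0 < m a ∧ x = 1 - s a / m a} := by
  refine ⟨1, ?_⟩
  rintro _ ⟨a, ha, hma, rfl⟩
  have := div_nonneg (hs a ha) hma.le
  linarith

lemma sub_le_mul_max_sSup_one_sub_div (hm : ∀ a ∈ K, 0 ≤ m a) (hs : ∀ a ∈ K, 0 ≤ s a)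
    {k : ℝ} {a : E} (ha : a ∈ K) (hak : m a ≤ k) :
    m a - s a ≤ k * max 0 (sSup {x | ∃ a ∈ K, 0 < m a ∧ x = 1 - s a / m a}) := by
  set L := max 0 (sSup {x | ∃ a ∈ K, 0 < m a ∧ x = 1 - s a / m a})
  have hkL : 0 ≤ k * L := mul_nonneg ((hm a ha).trans hak) (le_max_left _ _)
  rcases (hm a ha).eq_or_lt with hma | hma
  · linarith [hs a ha]
  · have hx : 1 - s a / m a ≤ L :=
      (le_csSup (bddAbove_one_sub_div hs) ⟨a, ha, hma, rfl⟩).trans (le_max_right _ _)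
    calc m a - s a = m a * (1 - s a / m a) := by field_simp
      _ ≤ m a * L := mul_le_mul_of_nonneg_left hx hma.le
      _ ≤ k * L := mul_le_mul_of_nonneg_right hak (le_max_left _ _)

lemma mul_one_sub_div_mem (hmK : PosHomogeneousOn m K) (hsK : PosHomogeneousOn s K)
    {k : ℝ} (hk : 0 < k) {a : E} (ha : a ∈ K) (hma : 0 < m a) :
    k * (1 - s a / m a) ∈ {h | ∃ a ∈ K, m a ≤ k ∧ h = m a - s a} := by
  have ht : 0 < k / m a := div_pos hk hma
  refine ⟨(k / m a) • a, K.smul_mem ht.le ha, ?_, ?_⟩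
  · rw [hmK a ha _ ht, div_mul_cancel₀ _ hma.ne']
  · rw [hmK a ha _ ht, hsK a ha _ ht, div_mul_cancel₀ _ hma.ne']
    field_simp

theorem sSup_sub_eq_mul_max_sSup_one_sub_div (hmK : PosHomogeneousOn m K)
    (hsK : PosHomogeneousOn s K) (hm : ∀ a ∈ K, 0 ≤ m a) (hs : ∀ a ∈ K, 0 ≤ s a)
    {k : ℝ} (hk : 0 < k) :
    sSup {h | ∃ a ∈ K, m a ≤ k ∧ h = m a - s a} =
      k * max 0 (sSup {x | ∃ a ∈ K, 0 < m a ∧ x = 1 - s a / m a}) := by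
  have hle : ∀ h ∈ {h | ∃ a ∈ K, m a ≤ k ∧ h = m a - s a},
      h ≤ k * max 0 (sSup {x | ∃ a ∈ K, 0 < m a ∧ x = 1 - s a / m a}) := by
    rintro _ ⟨a, ha, hak, rfl⟩
    exact sub_le_mul_max_sSup_one_sub_div hm hs ha hak
  have hbdd := (⟨_, hle⟩ : BddAbove {h | ∃ a ∈ K, m a ≤ k ∧ h = m a - s a})
  have hzero : (0 : ℝ) ∈ {h | ∃ a ∈ K, m a ≤ k ∧ h = m a - s a} :=
    ⟨0, K.zero_mem, by rw [hmK.map_zero]; exact hk.le, by rw [hmK.map_zero, hsK.map_zero]; simp⟩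
  have hsup_nonneg := le_csSup hbdd hzero
  refine le_antisymm (Real.sSup_le hle (by positivity)) ?_
  rw [mul_max_of_nonneg _ _ hk.le, mul_zero]
  refine max_le hsup_nonneg ?_
  rw [← le_div_iff₀' hk]
  refine Real.sSup_le ?_ (by positivity)
  rintro _ ⟨a, ha, hma, rfl⟩
  rw [le_div_iff₀' hk]
  exact le_csSup hbdd (mul_one_sub_div_mem hmK hsK hk ha hma)

end PointedCone

lemma posHomogeneousOn_sum {ι : Type*} [Fintype ι] (K : Set (ι → ℝ)) :
    PosHomogeneousOn (fun a => ∑ i, a i) K :=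
  fun _ _ t _ => by simp only [Pi.smul_apply, smul_eq_mul, ← Finset.mul_sum]

lemma posHomogeneousOn_inf'_sum_mul {ι κ : Type*} [Fintype ι] {F : Finset κ} (hF : F.Nonempty)
    (ν : κ → ι → ℝ) (K : Set (ι → ℝ)) :
    PosHomogeneousOn (fun a => F.inf' hF fun j => ∑ i, a i * ν j i) K := by
  intro a _ t ht
  simp only [Pi.smul_apply, smul_eq_mul, mul_assoc, ← Finset.mul_sum]
  exact (Finset.apply_inf'_eq_inf'_comp hF (t * ·) fun x y => mul_min_of_nonneg x y ht.le).symm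

theorem sup_h_on_Rk_eq_k_mul_leadingExponent_general (n : ℕ)
    (F : Finset (Fin n → ℕ)) (hF : F.Nonempty) (k : ℝ) (hk : 0 < k) :
    sSup {h : ℝ | ∃ a : Fin n → ℝ, (∀ i, 0 ≤ a i) ∧
        (F.inf' hF fun ν => ∑ i, a i * (ν i : ℝ)) ≤ k ∧
        h = (F.inf' hF fun ν => ∑ i, a i * (ν i : ℝ)) - ∑ i, a i} =
      k * max 0 (sSup {x : ℝ | ∃ a : Fin n → ℝ, (∀ i, 0 ≤ a i) ∧
        0 < (F.inf' hF fun ν => ∑ i, a i * (ν i : ℝ)) ∧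
        x = 1 - (∑ i, a i) / (F.inf' hF fun ν => ∑ i, a i * (ν i : ℝ))}) := by
  have key := sSup_sub_eq_mul_max_sSup_one_sub_div (K := PointedCone.positive ℝ (Fin n → ℝ))
    (posHomogeneousOn_inf'_sum_mul hF (fun ν i => (ν i : ℝ)) _) (posHomogeneousOn_sum _)
    (fun a ha => Finset.le_inf' hF _ fun ν _ =>
      Finset.sum_nonneg fun i _ => mul_nonneg (ha i) (Nat.cast_nonneg _))
    (fun a ha => Finset.sum_nonneg fun i _ => ha i) hk
  simpa only [PointedCone.mem_positive, Pi.le_def, Pi.zero_apply] using key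

/-- `sup { h(a) : a ∈ R_k } = k · Le(f)`: for every `k > 0`, the supremum of
`m(a) - s(a)` over nonnegative `a` with `m(a) ≤ k` equals `k` times the leading
exponent `max (0, sup { 1 - s(a)/m(a) : m(a) > 0 })`. -/
theorem sup_h_on_Rk_eq_k_mul_leadingExponent (n : ℕ) (hn : 1 ≤ n)
    (F : Finset (Fin n → ℕ)) (hF : F.Nonempty) (k : ℝ) (hk : 0 < k) :
    sSup {h : ℝ | ∃ a : Fin n → ℝ, (∀ i, 0 ≤ a i) ∧
        (F.inf' hF fun ν => ∑ i, a i * (ν i : ℝ)) ≤ k ∧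
        h = (F.inf' hF fun ν => ∑ i, a i * (ν i : ℝ)) - ∑ i, a i} =
      k * max 0 (sSup {x : ℝ | ∃ a : Fin n → ℝ, (∀ i, 0 ≤ a i) ∧
        0 < (F.inf' hF fun ν => ∑ i, a i * (ν i : ℝ)) ∧
        x = 1 - (∑ i, a i) / (F.inf' hF fun ν => ∑ i, a i * (ν i : ℝ))}) :=
  sup_h_on_Rk_eq_k_mul_leadingExponent_general n F hF k hk
end

section
/- Let F ⊆ ℕ² be a nonempty finite set such that ν₁ + ν₂ ≥ 2 for every ν ∈ F (the support of a two-variable polynomial singular at the origin). Let p, q be coprime positive integers and set m(p,q) = min_{ν∈F} (p·ν₁ + q·ν₂). If there exist two distinct points ν, ν′ ∈ F with p·ν₁ + q·ν₂ = p·ν′₁ + q·ν′₂ = m(p,q) (i.e. the face of the Newton polyhedron supported by (p,q) is one-dimensional), then m(p,q) ≥ p + q. -/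
lemma two_var_aux (p q a b c d : ℕ) (hp : 0 < p) (hq : 0 < q)
    (hpq : Nat.Coprime p q) (h2 : 2 ≤ a + b) (h2' : 2 ≤ c + d)
    (hlt : c < a) (heq : p * a + q * b = p * c + q * d) :
    p + q ≤ p * a + q * b := by
  have hbd : b < d := by
    by_contra h
    push_neg at h
    have h1 : p * c < p * a := (Nat.mul_lt_mul_left hp).mpr hlt
    have h2 : q * d ≤ q * b := Nat.mul_le_mul_left q h
    omega
  have key : p * (a - c) = q * (d - b) := by
    rw [Nat.mul_sub, Nat.mul_sub]
    omega
  have hqd : q ∣ (a - c) := by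
    have : q ∣ p * (a - c) := key ▸ Dvd.intro _ rfl
    exact (Nat.Coprime.dvd_of_dvd_mul_left hpq.symm this)
  have hpd : p ∣ (d - b) := by
    have : p ∣ q * (d - b) := key ▸ Dvd.intro _ rfl
    exact (Nat.Coprime.dvd_of_dvd_mul_left hpq this)
  have hac : q ≤ a - c := Nat.le_of_dvd (by omega) hqd
  have hdb : p ≤ d - b := Nat.le_of_dvd (by omega) hpd
  have ha1 : 1 ≤ a := by omega
  have hd1 : 1 ≤ d := by omega
  rcases Nat.eq_zero_or_pos b with hb | hb
  · rcases Nat.eq_zero_or_pos c with hc | hc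
    · subst hb; subst hc
      have ha2 : 2 ≤ a := by omega
      have hd2 : 2 ≤ d := by omega
      have e1 : 2 * p ≤ p * a := by nlinarith
      have e2 : 2 * q ≤ q * d := by nlinarith
      have heq' : p * a = q * d := by omega
      linarith
    · calc p + q = p * 1 + q * 1 := by ring
        _ ≤ p * c + q * d := by gcongr <;> omega
        _ = p * a + q * b := heq.symm
  · calc p + q = p * 1 + q * 1 := by ring
      _ ≤ p * a + q * b := by gcongr <;> omega

/-- For the support of a two-variable polynomial singular at the origin and a
primitive positive vector `(p,q)` supporting a one-dimensional face of the
Newton polyhedron, one has `m(p,q) ≥ p + q`. -/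
theorem two_var_face_mult_ge (F : Finset (ℕ × ℕ)) (hF : F.Nonempty)
    (hsing : ∀ ν ∈ F, 2 ≤ ν.1 + ν.2)
    (p q : ℕ) (hp : 0 < p) (hq : 0 < q) (hpq : Nat.Coprime p q)
    (ν ν' : ℕ × ℕ) (hν : ν ∈ F) (hν' : ν' ∈ F) (hne : ν ≠ ν')
    (hmin : p * ν.1 + q * ν.2 = F.inf' hF fun μ => p * μ.1 + q * μ.2)
    (hmin' : p * ν'.1 + q * ν'.2 = F.inf' hF fun μ => p * μ.1 + q * μ.2) :
    p + q ≤ F.inf' hF fun μ => p * μ.1 + q * μ.2 := by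
  have heq : p * ν.1 + q * ν.2 = p * ν'.1 + q * ν'.2 := hmin.trans hmin'.symm
  have h2 := hsing ν hν
  have h2' := hsing ν' hν'
  have hne1 : ν.1 ≠ ν'.1 := by
    intro h
    apply hne
    have hpp : p * ν.1 = p * ν'.1 := by rw [h]
    have : q * ν.2 = q * ν'.2 := by omega
    have : ν.2 = ν'.2 := Nat.eq_of_mul_eq_mul_left hq this
    exact Prod.ext h this
  rw [← hmin]
  rcases lt_or_gt_of_ne hne1 with h | h
  · rw [heq]
    exact two_var_aux p q ν'.1 ν'.2 ν.1 ν.2 hp hq hpq h2' h2 h heq.symm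
  · exact two_var_aux p q ν.1 ν.2 ν'.1 ν'.2 hp hq hpq h2 h2' h heq
end

section
/- Let n ≥ 1, let p₁, …, pₙ be positive integers, and let F ⊆ ℕⁿ be a finite set such that Σᵢ νᵢ/pᵢ = 1 for every ν ∈ F and such that pᵢ·eᵢ ∈ F for every i (where eᵢ is the i-th standard basis vector); this is the support of a convenient weighted homogeneous polynomial. Let L = lcm(p₁, …, pₙ) and v = (L/p₁, …, L/pₙ). Then: (i) m(v) = L, where m(a) = min_{ν∈F} ⟨a,ν⟩; (ii) s(v) = L·Σᵢ 1/pᵢ, where s(a) = a₁ + ⋯ + aₙ; and (iii) max(0, sup { 1 − s(a)/m(a) : a ∈ [0,∞)ⁿ, m(a) > 0 }) = max(0, 1 − Σᵢ 1/pᵢ). -/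
/-- For a convenient weighted homogeneous support `F` with axis vertices
`pᵢ·eᵢ`, letting `L = lcm(p₁,…,pₙ)` and `v = (L/p₁,…,L/pₙ)`:
`m(v) = L`, `s(v) = L·Σ 1/pᵢ` and the leading exponent equals
`max (0, 1 − Σ 1/pᵢ)`. -/
theorem weighted_homogeneous_leadingExponent (n : ℕ) (hn : 1 ≤ n)
    (p : Fin n → ℕ) (hp : ∀ i, 0 < p i)
    (F : Finset (Fin n → ℕ)) (hF : F.Nonempty)
    (hwh : ∀ ν ∈ F, ∑ i, (ν i : ℝ) / (p i : ℝ) = 1)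
    (hconv : ∀ i, Pi.single i (p i) ∈ F)
    (L : ℕ) (hL : L = Finset.univ.lcm p)
    (v : Fin n → ℝ) (hv : ∀ i, v i = (L : ℝ) / (p i : ℝ)) :
    (F.inf' hF fun ν => ∑ i, v i * (ν i : ℝ)) = L ∧
    (∑ i, v i) = (L : ℝ) * ∑ i, (1 : ℝ) / (p i : ℝ) ∧
    max 0 (sSup {x : ℝ | ∃ a : Fin n → ℝ, (∀ i, 0 ≤ a i) ∧
        0 < (F.inf' hF fun ν => ∑ i, a i * (ν i : ℝ)) ∧
        x = 1 - (∑ i, a i) / (F.inf' hF fun ν => ∑ i, a i * (ν i : ℝ))}) =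
      max 0 (1 - ∑ i, (1 : ℝ) / (p i : ℝ)) := by
  have hpR : ∀ i, (0:ℝ) < (p i : ℝ) := fun i => by exact_mod_cast hp i
  have hLpos : 0 < L := by
    rw [hL]
    refine Nat.pos_of_ne_zero fun h0 => ?_
    rw [Finset.lcm_eq_zero_iff] at h0
    obtain ⟨i, -, hi⟩ := h0
    exact (hp i).ne' hi
  have hLR : (0:ℝ) < (L : ℝ) := by exact_mod_cast hLpos
  -- value of the linear form at each ν ∈ F
  have hval : ∀ ν ∈ F, (∑ i, v i * (ν i : ℝ)) = L := by
    intro ν hν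
    have : (∑ i, v i * (ν i : ℝ)) = (L:ℝ) * ∑ i, (ν i : ℝ) / (p i : ℝ) := by
      rw [Finset.mul_sum]
      refine Finset.sum_congr rfl fun i _ => ?_
      rw [hv i]
      field_simp
    rw [this, hwh ν hν, mul_one]
  have hm : (F.inf' hF fun ν => ∑ i, v i * (ν i : ℝ)) = L := by
    apply le_antisymm
    · obtain ⟨ν, hν⟩ := hF
      exact le_trans (Finset.inf'_le _ hν) (le_of_eq (hval ν hν))
    · exact Finset.le_inf' _ _ fun ν hν => le_of_eq (hval ν hν).symm
  have hs : (∑ i, v i) = (L : ℝ) * ∑ i, (1 : ℝ) / (p i : ℝ) := by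
    rw [Finset.mul_sum]
    refine Finset.sum_congr rfl fun i _ => ?_
    rw [hv i]; ring
  refine ⟨hm, hs, ?_⟩
  congr 1
  set c : ℝ := ∑ i, (1 : ℝ) / (p i : ℝ) with hc
  -- value of the linear form at the axis vertex
  have haxis : ∀ (a : Fin n → ℝ) (i : Fin n),
      (∑ j, a j * ((Pi.single i (p i) : Fin n → ℕ) j : ℝ)) = a i * p i := by
    intro a i
    rw [Finset.sum_eq_single i]
    · simp
    · intro j _ hj
      simp [Pi.single_eq_of_ne hj]
    · simp
  -- upper bound
  have hub : ∀ x ∈ {x : ℝ | ∃ a : Fin n → ℝ, (∀ i, 0 ≤ a i) ∧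
        0 < (F.inf' hF fun ν => ∑ i, a i * (ν i : ℝ)) ∧
        x = 1 - (∑ i, a i) / (F.inf' hF fun ν => ∑ i, a i * (ν i : ℝ))},
      x ≤ 1 - c := by
    rintro x ⟨a, ha0, hma, rfl⟩
    set m : ℝ := F.inf' hF fun ν => ∑ i, a i * (ν i : ℝ) with hmdef
    have hle : ∀ i, m ≤ a i * p i := by
      intro i
      have := Finset.inf'_le (fun ν => ∑ j, a j * (ν j : ℝ)) (hconv i)
      rwa [haxis a i] at this
    have hsum : m * c ≤ ∑ i, a i := by
      rw [hc, Finset.mul_sum]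
      refine Finset.sum_le_sum fun i _ => ?_
      rw [mul_one_div, div_le_iff₀ (hpR i)]
      exact hle i
    have : c ≤ (∑ i, a i) / m := by
      rw [le_div_iff₀ hma]
      linarith [hsum]
    linarith
  -- the value is attained at a = v
  have hmem : (1 - c) ∈ {x : ℝ | ∃ a : Fin n → ℝ, (∀ i, 0 ≤ a i) ∧
        0 < (F.inf' hF fun ν => ∑ i, a i * (ν i : ℝ)) ∧
        x = 1 - (∑ i, a i) / (F.inf' hF fun ν => ∑ i, a i * (ν i : ℝ))} := by
    refine ⟨v, fun i => ?_, ?_, ?_⟩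
    · rw [hv i]; positivity
    · rw [hm]; exact hLR
    · rw [hm, hs, mul_comm, mul_div_assoc, div_self hLR.ne', mul_one]
  exact le_antisymm (csSup_le ⟨_, hmem⟩ hub) (le_csSup ⟨1 - c, hub⟩ hmem)
end

section
/- Let n ≥ 1, let p₁, …, pₙ be positive integers, and let F ⊆ ℕⁿ be a finite set such that Σᵢ νᵢ/pᵢ = 1 for every ν ∈ F and pᵢ·eᵢ ∈ F for every i. Let L = lcm(p₁, …, pₙ), v = (L/p₁, …, L/pₙ), m(a) = min_{ν∈F} ⟨a,ν⟩, s(a) = a₁ + ⋯ + aₙ, h(a) = m(a) − s(a), and Le = max(0, sup { 1 − s(a)/m(a) : a ∈ [0,∞)ⁿ, m(a) > 0 }). Then Le > 0 if and only if h(v) > 0, and if h(v) > 0 then h(v) = m(v)·Le. -/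
/-- For a convenient weighted homogeneous support `F` with axis vertices
`pᵢ·eᵢ` and primitive facet vector `v = (L/p₁,…,L/pₙ)`:
`Le > 0 ↔ h(v) > 0`, and if `h(v) > 0` then `h(v) = m(v)·Le`. -/
theorem weighted_homogeneous_h_v_pos_iff (n : ℕ) (hn : 1 ≤ n)
    (p : Fin n → ℕ) (hp : ∀ i, 0 < p i)
    (F : Finset (Fin n → ℕ)) (hF : F.Nonempty)
    (hwh : ∀ ν ∈ F, ∑ i, (ν i : ℝ) / (p i : ℝ) = 1)
    (hconv : ∀ i, Pi.single i (p i) ∈ F)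
    (L : ℕ) (hL : L = Finset.univ.lcm p)
    (v : Fin n → ℝ) (hv : ∀ i, v i = (L : ℝ) / (p i : ℝ))
    (m s h Le : ℝ)
    (hm : m = F.inf' hF fun ν => ∑ i, v i * (ν i : ℝ))
    (hs : s = ∑ i, v i)
    (hh : h = m - s)
    (hLe : Le = max 0 (sSup {x : ℝ | ∃ a : Fin n → ℝ, (∀ i, 0 ≤ a i) ∧
        0 < (F.inf' hF fun ν => ∑ i, a i * (ν i : ℝ)) ∧
        x = 1 - (∑ i, a i) / (F.inf' hF fun ν => ∑ i, a i * (ν i : ℝ))})) :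
    (0 < Le ↔ 0 < h) ∧ (0 < h → h = m * Le) := by
  have hLne : L ≠ 0 := by
    subst hL
    rw [Ne, Finset.lcm_eq_zero_iff]
    rintro ⟨i, -, hi⟩
    exact (hp i).ne' hi
  have hLR : (0:ℝ) < L := by exact_mod_cast Nat.pos_of_ne_zero hLne
  have hpR : ∀ i, (0:ℝ) < p i := fun i => by exact_mod_cast hp i
  -- key: ⟨v, ν⟩ = L for all ν ∈ F
  have hsum : ∀ ν ∈ F, ∑ i, v i * (ν i : ℝ) = L := by
    intro ν hν
    have : ∑ i, v i * (ν i : ℝ) = (L:ℝ) * ∑ i, (ν i : ℝ) / (p i : ℝ) := by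
      rw [Finset.mul_sum]
      refine Finset.sum_congr rfl fun i _ => ?_
      rw [hv i]; ring
    rw [this, hwh ν hν, mul_one]
  have hmL : m = L := by
    rw [hm]
    apply le_antisymm
    · exact (Finset.inf'_le _ hF.choose_spec).trans_eq (hsum _ hF.choose_spec)
    · exact Finset.le_inf' _ _ fun ν hν => (hsum ν hν).ge
  have hsval : s = (L:ℝ) * ∑ i, 1 / (p i : ℝ) := by
    rw [hs, Finset.mul_sum]
    refine Finset.sum_congr rfl fun i _ => ?_
    rw [hv i]; ring
  set c : ℝ := 1 - ∑ i, 1 / (p i : ℝ) with hc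
  have hhval : h = (L:ℝ) * c := by rw [hh, hmL, hsval, hc]; ring
  -- the sup set
  set S : Set ℝ := {x : ℝ | ∃ a : Fin n → ℝ, (∀ i, 0 ≤ a i) ∧
        0 < (F.inf' hF fun ν => ∑ i, a i * (ν i : ℝ)) ∧
        x = 1 - (∑ i, a i) / (F.inf' hF fun ν => ∑ i, a i * (ν i : ℝ))} with hS
  have hinfv : (F.inf' hF fun ν => ∑ i, v i * (ν i : ℝ)) = L := by rw [← hm, hmL]
  have hgreatest : IsGreatest S c := by
    constructor
    · refine ⟨v, fun i => ?_, ?_, ?_⟩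
      · rw [hv i]; positivity
      · rw [hinfv]; exact hLR
      · rw [hinfv, ← hs, hsval, mul_div_cancel_left₀ _ hLR.ne']
    · rintro x ⟨a, ha0, hMpos, hx⟩
      set M := F.inf' hF fun ν => ∑ i, a i * (ν i : ℝ) with hM
      have hai : ∀ i, M / (p i : ℝ) ≤ a i := by
        intro i
        have hle : M ≤ ∑ j, a j * (((Pi.single i (p i) : Fin n → ℕ) j : ℕ) : ℝ) :=
          Finset.inf'_le _ (hconv i)
        have hcalc : ∑ j, a j * (((Pi.single i (p i) : Fin n → ℕ) j : ℕ) : ℝ) = a i * p i := by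
          rw [Finset.sum_eq_single i]
          · rw [Pi.single_eq_same]
          · intro j _ hj
            rw [Pi.single_eq_of_ne hj]
            simp
          · intro hi; exact absurd (Finset.mem_univ i) hi
        rw [hcalc] at hle
        rw [div_le_iff₀ (hpR i)]
        exact hle
      have hsa : M * ∑ i, 1 / (p i : ℝ) ≤ ∑ i, a i := by
        rw [Finset.mul_sum]
        refine Finset.sum_le_sum fun i _ => ?_
        rw [mul_one_div]
        exact hai i
      rw [hx]
      have : ∑ i, 1 / (p i : ℝ) ≤ (∑ i, a i) / M := by
        rw [le_div_iff₀ hMpos]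
        linarith [hsa]
      linarith
  have hsSup : sSup S = c := hgreatest.csSup_eq
  have hLeval : Le = max 0 c := by rw [hLe, hsSup]
  constructor
  · rw [hLeval, hhval]
    constructor
    · intro hlt
      rcases lt_max_iff.mp hlt with h0 | hc0
      · exact absurd h0 (lt_irrefl 0)
      · exact mul_pos hLR hc0
    · intro hlt
      have hc0 : 0 < c := by nlinarith
      exact lt_max_iff.mpr (Or.inr hc0)
  · intro hpos
    have hc0 : 0 < c := by nlinarith [hhval ▸ hpos]
    rw [hhval, hLeval, hmL, max_eq_right hc0.le]
end

section
/- Let f be a nonzero real polynomial in n variables with support F ⊆ ℕⁿ, written f(x) = Σ_{ν∈F} c_ν x^ν with c_ν ≠ 0. Let a ∈ ℕⁿ, set m(a) = min_{ν∈F} ⟨a,ν⟩, and let γ(a) = { ν ∈ F : ⟨a,ν⟩ = m(a) } with f_{γ(a)}(x) = Σ_{ν∈γ(a)} c_ν x^ν. Let φ₁, …, φₙ be formal power series over ℝ and define αᵢ(t) = t^{aᵢ}·φᵢ(t). Then in the formal power series f(α₁(t), …, αₙ(t)): (i) the coefficient of t^j vanishes for every j < m(a); and (ii) the coefficient of t^{m(a)}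 equals f_{γ(a)}(φ₁(0), …, φₙ(0)). -/
/-!
Substituting `αᵢ = X^{aᵢ} φᵢ` into the monomial `x^ν` gives `X^{⟨a,ν⟩} ∏ φᵢ^{νᵢ}`. Since
`⟨a,ν⟩ ≥ m` on the support, no monomial reaches below `X^m`, and only those with
`⟨a,ν⟩ = m` reach `X^m`, each contributing the constant term `c_ν φ(0)^ν`.
-/

namespace PowerSeries

variable {R ι : Type*} [CommSemiring R]

lemma prod_X_pow_mul_pow [Fintype ι] (a ν : ι → ℕ) (φ : ι → R⟦X⟧) :
    ∏ i, (X ^ a i * φ i) ^ ν i = X ^ (∑ i, a i * ν i) * ∏ i, φ i ^ ν i := by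
  simp only [mul_pow, ← pow_mul, Finset.prod_mul_distrib, Finset.prod_pow_eq_pow_sum]

lemma coeff_sum_X_pow_mul_of_lt (s : Finset ι) (w : ι → ℕ) (g : ι → R⟦X⟧) {j : ℕ}
    (hj : ∀ i ∈ s, j < w i) : coeff j (∑ i ∈ s, X ^ w i * g i) = 0 := by
  rw [map_sum]
  refine Finset.sum_eq_zero fun i hi => ?_
  rw [coeff_X_pow_mul', if_neg (hj i hi).not_ge]

lemma coeff_sum_X_pow_mul_of_le (s : Finset ι) (w : ι → ℕ) (g : ι → R⟦X⟧) {m : ℕ}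
    (hm : ∀ i ∈ s, m ≤ w i) :
    coeff m (∑ i ∈ s, X ^ w i * g i) = ∑ i ∈ s with w i = m, coeff 0 (g i) := by
  rw [map_sum, Finset.sum_filter]
  refine Finset.sum_congr rfl fun i hi => ?_
  rw [coeff_X_pow_mul']
  rcases (hm i hi).eq_or_lt with h | h
  · rw [if_pos h.ge, if_pos h.symm, h, Nat.sub_self]
  · rw [if_neg h.not_ge, if_neg h.ne']

end PowerSeries

open PowerSeries in
theorem substitution_identity_general (n : ℕ) (F : Finset (Fin n → ℕ)) (hF : F.Nonempty)
    (c : (Fin n → ℕ) → ℝ)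
    (a : Fin n → ℕ) (φ : Fin n → PowerSeries ℝ)
    (m : ℕ) (hm : m = F.inf' hF fun ν => ∑ i, a i * ν i)
    (fα : PowerSeries ℝ)
    (hfα : fα = ∑ ν ∈ F, PowerSeries.C (c ν) *
      ∏ i, ((PowerSeries.X : PowerSeries ℝ) ^ (a i) * φ i) ^ (ν i)) :
    (∀ j : ℕ, j < m → PowerSeries.coeff j fα = 0) ∧
    PowerSeries.coeff m fα =
      ∑ ν ∈ F.filter (fun ν => ∑ i, a i * ν i = m),
        c ν * ∏ i, (PowerSeries.coeff 0 (φ i)) ^ (ν i) := by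
  have hfα' : fα = ∑ ν ∈ F, X ^ (∑ i, a i * ν i) * (C (c ν) * ∏ i, φ i ^ ν i) := by
    rw [hfα]
    refine Finset.sum_congr rfl fun ν _ => ?_
    rw [prod_X_pow_mul_pow, mul_left_comm]
  have hm_le : ∀ ν ∈ F, m ≤ ∑ i, a i * ν i := fun ν hν => hm ▸ F.inf'_le _ hν
  refine ⟨fun j hj => ?_, ?_⟩
  · rw [hfα']
    exact coeff_sum_X_pow_mul_of_lt F _ _ fun ν hν => hj.trans_le (hm_le ν hν)
  · rw [hfα', coeff_sum_X_pow_mul_of_le F _ _ hm_le]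
    simp only [coeff_zero_eq_constantCoeff, map_mul, constantCoeff_C, map_prod, map_pow]

/-- Key substitution identity: for `f(x) = Σ_{ν∈F} c_ν x^ν` and arcs
`αᵢ(t) = t^{aᵢ} φᵢ(t)`, the power series `f(α(t))` has vanishing coefficients
below `m(a)` and its coefficient of `t^{m(a)}` is `f_{γ(a)}(φ(0))`. -/
theorem substitution_identity (n : ℕ) (F : Finset (Fin n → ℕ)) (hF : F.Nonempty)
    (c : (Fin n → ℕ) → ℝ) (hc : ∀ ν ∈ F, c ν ≠ 0)
    (a : Fin n → ℕ) (φ : Fin n → PowerSeries ℝ)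
    (m : ℕ) (hm : m = F.inf' hF fun ν => ∑ i, a i * ν i)
    (fα : PowerSeries ℝ)
    (hfα : fα = ∑ ν ∈ F, PowerSeries.C (c ν) *
      ∏ i, ((PowerSeries.X : PowerSeries ℝ) ^ (a i) * φ i) ^ (ν i)) :
    (∀ j : ℕ, j < m → PowerSeries.coeff j fα = 0) ∧
    PowerSeries.coeff m fα =
      ∑ ν ∈ F.filter (fun ν => ∑ i, a i * ν i = m),
        c ν * ∏ i, (PowerSeries.coeff 0 (φ i)) ^ (ν i) :=
  substitution_identity_general n F hF c a φ m hm fα hfα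
end

section
/- Let f be a nonzero real polynomial in n variables with support F ⊆ ℕⁿ, written f(x) = Σ_{ν∈F} c_ν x^ν with c_ν ≠ 0. Let a ∈ ℕⁿ with aᵢ ≥ 1 for all i, set m(a) = min_{ν∈F} ⟨a,ν⟩, γ(a) = { ν ∈ F : ⟨a,ν⟩ = m(a) }, and f_{γ(a)}(x) = Σ_{ν∈γ(a)} c_ν x^ν. Suppose c ∈ ℝⁿ has cᵢ ≠ 0 for all i and f_{γ(a)}(c) ≠ 0. Then the arc α(t) = (c₁ t^{a₁}, …, cₙ t^{aₙ}) satisfies: the formal power series f(α(t)) has order exactly m(a), i.e. its coefficient of t^j vanishes for j < m(a) and its coefficient of t^{m(a)} is nonzero. -/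
/-! Along the arc each monomial `x^ν` becomes `c^ν t^⟨a,ν⟩`, so the coefficient of `t^j` in
`f(α(t))` is the sum of `d ν c^ν` over the `ν ∈ F` with `⟨a,ν⟩ = j`: an empty sum for `j < m(a)`,
and `f_{γ(a)}(c)` for `j = m(a)`. -/

namespace PowerSeries

variable {R : Type*} [CommSemiring R]

theorem prod_pow_C_mul_X_pow {ι : Type*} (s : Finset ι) (c : ι → R) (a ν : ι → ℕ) :
    ∏ i ∈ s, (C (c i) * X ^ a i) ^ ν i = C (∏ i ∈ s, c i ^ ν i) * X ^ ∑ i ∈ s, a i * ν i := by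
  simp_rw [mul_pow, ← map_pow, ← pow_mul]
  rw [Finset.prod_mul_distrib, map_prod, Finset.prod_pow_eq_pow_sum]

theorem coeff_sum_C_mul_X_pow {κ : Type*} (F : Finset κ) (e : κ → R) (w : κ → ℕ) (j : ℕ) :
    coeff j (∑ ν ∈ F, C (e ν) * X ^ w ν) = ∑ ν ∈ F with w ν = j, e ν := by
  simp_rw [map_sum, coeff_C_mul_X_pow, Finset.sum_filter, eq_comm]

end PowerSeries

theorem arc_order_eq_multiplicity_general (n : ℕ) (F : Finset (Fin n → ℕ)) (hF : F.Nonempty)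
    (d : (Fin n → ℕ) → ℝ)
    (a : Fin n → ℕ)
    (m : ℕ) (hm : m = F.inf' hF fun ν => ∑ i, a i * ν i)
    (c : Fin n → ℝ)
    (hface : ∑ ν ∈ F.filter (fun ν => ∑ i, a i * ν i = m),
      d ν * ∏ i, (c i) ^ (ν i) ≠ 0)
    (fα : PowerSeries ℝ)
    (hfα : fα = ∑ ν ∈ F, PowerSeries.C (d ν) *
      ∏ i, (PowerSeries.C (c i) * (PowerSeries.X : PowerSeries ℝ) ^ (a i)) ^ (ν i)) :
    (∀ j : ℕ, j < m → PowerSeries.coeff j fα = 0) ∧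
    PowerSeries.coeff m fα ≠ 0 := by
  have hcoeff : ∀ j, PowerSeries.coeff j fα =
      ∑ ν ∈ F with ∑ i, a i * ν i = j, d ν * ∏ i, c i ^ ν i := by
    intro j
    simp_rw [hfα, PowerSeries.prod_pow_C_mul_X_pow, ← mul_assoc, ← map_mul]
    exact PowerSeries.coeff_sum_C_mul_X_pow F _ _ j
  refine ⟨fun j hj => ?_, hcoeff m ▸ hface⟩
  rw [hcoeff]
  refine Finset.sum_eq_zero fun ν hν => absurd (Finset.mem_filter.1 hν).2 ?_
  have hmin : m ≤ ∑ i, a i * ν i := hm ▸ Finset.inf'_le _ (Finset.mem_filter.1 hν).1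
  omega

/-- If `f_{γ(a)}(c) ≠ 0` for a point `c` with all coordinates nonzero, then the
arc `α(t) = (c₁ t^{a₁},…,cₙ t^{aₙ})` satisfies `ord f(α(t)) = m(a)`. -/
theorem arc_order_eq_multiplicity (n : ℕ) (F : Finset (Fin n → ℕ)) (hF : F.Nonempty)
    (d : (Fin n → ℕ) → ℝ) (hd : ∀ ν ∈ F, d ν ≠ 0)
    (a : Fin n → ℕ) (ha : ∀ i, 1 ≤ a i)
    (m : ℕ) (hm : m = F.inf' hF fun ν => ∑ i, a i * ν i)
    (c : Fin n → ℝ) (hc : ∀ i, c i ≠ 0)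
    (hface : ∑ ν ∈ F.filter (fun ν => ∑ i, a i * ν i = m),
      d ν * ∏ i, (c i) ^ (ν i) ≠ 0)
    (fα : PowerSeries ℝ)
    (hfα : fα = ∑ ν ∈ F, PowerSeries.C (d ν) *
      ∏ i, (PowerSeries.C (c i) * (PowerSeries.X : PowerSeries ℝ) ^ (a i)) ^ (ν i)) :
    (∀ j : ℕ, j < m → PowerSeries.coeff j fα = 0) ∧
    PowerSeries.coeff m fα ≠ 0 :=
  arc_order_eq_multiplicity_general n F hF d a m hm c hface fα hfα
end
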